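/- Let r1, r2, r3 > 0 be real numbers, α1, α2 ∈ ℚ, and let l be the least element of the set { |mπ + m1 α1 π + m2 α2 π| : m, m1, m2 ∈ ℤ, mπ + m1 α1 π + m2 α2 π ≠ 0 }. Then for t1, t2 ∈ ℝ, M(t1) = M(t2) if and only if there exists k ∈ ℤ such that t1 = t2 + 2kl or t1 = 2kl − t2. -/
import Mathlib


noncomputable section

open Real

/-- `M t = sup_{θ₁, θ₂ ∈ ℝ} [ r₁ cos θ₁ + r₂ cos θ₂ + r₃ cos(α₁ θ₁ + α₂ θ₂ + t) ]`. -/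
def M (r1 r2 r3 : ℝ) (α1 α2 : ℚ) (t : ℝ) : ℝ :=
  sSup {v : ℝ | ∃ θ1 θ2 : ℝ,
    v = r1 * cos θ1 + r2 * cos θ2 + r3 * cos ((α1 : ℝ) * θ1 + (α2 : ℝ) * θ2 + t)}

/-- The set `{ |mπ + m₁α₁π + m₂α₂π| : m, m₁, m₂ ∈ ℤ, mπ + m₁α₁π + m₂α₂π ≠ 0 }`. -/
def Lset (α1 α2 : ℚ) : Set ℝ :=
  {x : ℝ | ∃ m m1 m2 : ℤ,
    x = |(m : ℝ) * π + (m1 : ℝ) * (α1 : ℝ) * π + (m2 : ℝ) * (α2 : ℝ) * π| ∧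
    (m : ℝ) * π + (m1 : ℝ) * (α1 : ℝ) * π + (m2 : ℝ) * (α2 : ℝ) * π ≠ 0}

namespace Stmt7Aux

def G (α1 α2 : ℚ) : Set ℝ :=
  {x : ℝ | ∃ m m1 m2 : ℤ,
    x = (m : ℝ) * π + (m1 : ℝ) * (α1 : ℝ) * π + (m2 : ℝ) * (α2 : ℝ) * π}

lemma G_neg {α1 α2 : ℚ} {x : ℝ} (hx : x ∈ G α1 α2) : -x ∈ G α1 α2 := by
  obtain ⟨m, m1, m2, rfl⟩ := hx
  exact ⟨-m, -m1, -m2, by push_cast; ring⟩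

lemma G_intmul {α1 α2 : ℚ} (k : ℤ) {x : ℝ} (hx : x ∈ G α1 α2) : (k:ℝ)*x ∈ G α1 α2 := by
  obtain ⟨m, m1, m2, rfl⟩ := hx
  exact ⟨k*m, k*m1, k*m2, by push_cast; ring⟩

lemma cos_eq_of_eq_add_int (x y : ℝ) (n : ℤ) (h : y = x + n*(2*π)) : cos y = cos x := by
  rw [h, cos_add_int_mul_two_pi]

lemma reduceAngle (x : ℝ) : ∃ n : ℤ, |x - 2*π*n| ≤ π ∧ cos (x - 2*π*n) = cos x := by
  refine ⟨round (x / (2*π)),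
    ?_, cos_eq_of_eq_add_int x (x - 2*π*(round (x / (2*π)))) (-(round (x / (2*π)))) (by push_cast; ring)⟩
  have hπ := Real.pi_pos
  have h1 : |x / (2*π) - round (x / (2*π))| ≤ 1/2 := abs_sub_round _
  have h2 : x - 2*π*(round (x / (2*π))) = (2*π) * (x / (2*π) - round (x / (2*π))) := by
    field_simp
  rw [h2, abs_mul, abs_of_pos (by positivity : (0:ℝ) < 2*π)]
  nlinarith


def S (r1 r2 r3 : ℝ) (α1 α2 : ℚ) (t : ℝ) : Set ℝ :=
  {v : ℝ | ∃ θ1 θ2 : ℝ,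
    v = r1 * cos θ1 + r2 * cos θ2 + r3 * cos ((α1 : ℝ) * θ1 + (α2 : ℝ) * θ2 + t)}

lemma M_eq_sSup (r1 r2 r3 : ℝ) (α1 α2 : ℚ) (t : ℝ) :
    M r1 r2 r3 α1 α2 t = sSup (S r1 r2 r3 α1 α2 t) := rfl

lemma S_nonempty (r1 r2 r3 : ℝ) (α1 α2 : ℚ) (t : ℝ) : (S r1 r2 r3 α1 α2 t).Nonempty :=
  ⟨_, 0, 0, rfl⟩

lemma S_bddAbove (r1 r2 r3 : ℝ) (h1 : 0 ≤ r1) (h2 : 0 ≤ r2) (h3 : 0 ≤ r3)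
    (α1 α2 : ℚ) (t : ℝ) : BddAbove (S r1 r2 r3 α1 α2 t) := by
  refine ⟨r1 + r2 + r3, ?_⟩
  rintro v ⟨θ1, θ2, rfl⟩
  have c1 := Real.cos_le_one θ1
  have c2 := Real.cos_le_one θ2
  have c3 := Real.cos_le_one ((α1 : ℝ) * θ1 + (α2 : ℝ) * θ2 + t)
  nlinarith

lemma f_le_M (r1 r2 r3 : ℝ) (h1 : 0 ≤ r1) (h2 : 0 ≤ r2) (h3 : 0 ≤ r3)
    (α1 α2 : ℚ) (t θ1 θ2 : ℝ) :
    r1 * cos θ1 + r2 * cos θ2 + r3 * cos ((α1 : ℝ) * θ1 + (α2 : ℝ) * θ2 + t)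
      ≤ M r1 r2 r3 α1 α2 t :=
  le_csSup (S_bddAbove r1 r2 r3 h1 h2 h3 α1 α2 t) ⟨θ1, θ2, rfl⟩

lemma S_subset_shift (r1 r2 r3 : ℝ) (α1 α2 : ℚ) {x : ℝ} (hx : x ∈ G α1 α2) (t : ℝ) :
    S r1 r2 r3 α1 α2 t ⊆ S r1 r2 r3 α1 α2 (t + 2*x) := by
  obtain ⟨m, m1, m2, rfl⟩ := hx
  rintro v ⟨θ1, θ2, rfl⟩
  refine ⟨θ1 - 2*π*m1, θ2 - 2*π*m2, ?_⟩
  rw [cos_eq_of_eq_add_int θ1 (θ1 - 2*π*m1) (-m1) (by push_cast; ring),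
      cos_eq_of_eq_add_int θ2 (θ2 - 2*π*m2) (-m2) (by push_cast; ring),
      cos_eq_of_eq_add_int ((α1 : ℝ) * θ1 + (α2 : ℝ) * θ2 + t)
        ((α1 : ℝ) * (θ1 - 2*π*m1) + (α2 : ℝ) * (θ2 - 2*π*m2)
          + (t + 2*((m : ℝ) * π + (m1 : ℝ) * (α1 : ℝ) * π + (m2 : ℝ) * (α2 : ℝ) * π))) m
        (by push_cast; ring)]

lemma M_shift (r1 r2 r3 : ℝ) (α1 α2 : ℚ) {x : ℝ} (hx : x ∈ G α1 α2) (t : ℝ) :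
    M r1 r2 r3 α1 α2 (t + 2*x) = M r1 r2 r3 α1 α2 t := by
  rw [M_eq_sSup, M_eq_sSup]
  congr 1
  refine le_antisymm ?_ (S_subset_shift r1 r2 r3 α1 α2 hx t)
  have h := S_subset_shift r1 r2 r3 α1 α2 (G_neg hx) (t + 2*x)
  simpa using h

lemma S_subset_neg (r1 r2 r3 : ℝ) (α1 α2 : ℚ) (t : ℝ) :
    S r1 r2 r3 α1 α2 t ⊆ S r1 r2 r3 α1 α2 (-t) := by
  rintro v ⟨θ1, θ2, rfl⟩
  refine ⟨-θ1, -θ2, ?_⟩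
  rw [show (α1 : ℝ) * -θ1 + (α2 : ℝ) * -θ2 + -t = -((α1 : ℝ) * θ1 + (α2 : ℝ) * θ2 + t) by ring,
    Real.cos_neg, Real.cos_neg, Real.cos_neg]

lemma M_neg (r1 r2 r3 : ℝ) (α1 α2 : ℚ) (t : ℝ) :
    M r1 r2 r3 α1 α2 (-t) = M r1 r2 r3 α1 α2 t := by
  rw [M_eq_sSup, M_eq_sSup]
  congr 1
  refine le_antisymm ?_ (S_subset_neg r1 r2 r3 α1 α2 t)
  have h := S_subset_neg r1 r2 r3 α1 α2 (-t)
  simpa using h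

lemma rat_mul_den (q : ℚ) : (q:ℝ) * (q.den:ℝ) = (q.num:ℝ) := by
  rw [show ((q:ℝ)) = (q.num:ℝ)/(q.den:ℝ) by rw [← Rat.cast_def]]
  field_simp


lemma M_attain (r1 r2 r3 : ℝ) (h1 : 0 ≤ r1) (h2 : 0 ≤ r2) (h3 : 0 ≤ r3)
    (α1 α2 : ℚ) (t : ℝ) :
    ∃ θ1 θ2 : ℝ, M r1 r2 r3 α1 α2 t
      = r1 * cos θ1 + r2 * cos θ2 + r3 * cos ((α1 : ℝ) * θ1 + (α2 : ℝ) * θ2 + t) := by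
  have hπ := Real.pi_pos
  set q : ℕ := α1.den * α2.den with hq
  have hq0 : 0 < (q:ℝ) := by
    have := α1.pos; have := α2.pos
    simp only [hq]; positivity
  set P : ℝ := 2*π*q with hP
  have hP0 : 0 < P := by rw [hP]; positivity
  have hα1P : (α1:ℝ) * P = ((α1.num * (α2.den:ℤ) : ℤ):ℝ) * (2*π) := by
    have h := rat_mul_den α1
    rw [hP, hq]; push_cast
    linear_combination (2*π*(α2.den:ℝ)) * h
  have hα2P : (α2:ℝ) * P = ((α2.num * (α1.den:ℤ) : ℤ):ℝ) * (2*π) := by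
    have h := rat_mul_den α2
    rw [hP, hq]; push_cast
    linear_combination (2*π*(α1.den:ℝ)) * h
  have hg : Continuous (fun p : ℝ × ℝ =>
      r1 * cos p.1 + r2 * cos p.2 + r3 * cos ((α1:ℝ)*p.1 + (α2:ℝ)*p.2 + t)) := by
    fun_prop
  have hK : IsCompact (Set.Icc (0:ℝ) P ×ˢ Set.Icc (0:ℝ) P) := isCompact_Icc.prod isCompact_Icc
  have hKne : (Set.Icc (0:ℝ) P ×ˢ Set.Icc (0:ℝ) P).Nonempty :=
    ⟨(0,0), Set.mem_prod.mpr ⟨Set.mem_Icc.mpr ⟨le_refl _, hP0.le⟩, Set.mem_Icc.mpr ⟨le_refl _, hP0.le⟩⟩⟩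
  obtain ⟨p0, _, hmax'⟩ := hK.exists_isMaxOn hKne hg.continuousOn
  have hmax := hmax'
  refine ⟨p0.1, p0.2, le_antisymm ?_ (f_le_M r1 r2 r3 h1 h2 h3 α1 α2 t p0.1 p0.2)⟩
  refine csSup_le (S_nonempty r1 r2 r3 α1 α2 t) ?_
  rintro v ⟨θ1, θ2, rfl⟩
  set n1 : ℤ := ⌊θ1 / P⌋ with hn1
  set n2 : ℤ := ⌊θ2 / P⌋ with hn2
  have h1m : θ1 - n1 * P ∈ Set.Icc (0:ℝ) P :=
    ⟨Int.sub_floor_div_mul_nonneg θ1 hP0, (Int.sub_floor_div_mul_lt θ1 hP0).le⟩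
  have h2m : θ2 - n2 * P ∈ Set.Icc (0:ℝ) P :=
    ⟨Int.sub_floor_div_mul_nonneg θ2 hP0, (Int.sub_floor_div_mul_lt θ2 hP0).le⟩
  have e1 : cos (θ1 - n1*P) = cos θ1 :=
    cos_eq_of_eq_add_int θ1 (θ1 - n1*P) (-(n1 * (q:ℤ))) (by rw [hP]; push_cast; ring)
  have e2 : cos (θ2 - n2*P) = cos θ2 :=
    cos_eq_of_eq_add_int θ2 (θ2 - n2*P) (-(n2 * (q:ℤ))) (by rw [hP]; push_cast; ring)
  push_cast at hα1P hα2P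
  have e3 : cos ((α1:ℝ)*(θ1 - n1*P) + (α2:ℝ)*(θ2 - n2*P) + t)
      = cos ((α1:ℝ)*θ1 + (α2:ℝ)*θ2 + t) := by
    refine cos_eq_of_eq_add_int _ _
      (-(n1 * (α1.num * α2.den) + n2 * (α2.num * α1.den))) ?_
    push_cast
    linear_combination (-(n1:ℝ))*hα1P - (n2:ℝ)*hα2P
  have := hmax (Set.mem_prod.mpr ⟨h1m, h2m⟩ :
    ((θ1 - n1*P, θ2 - n2*P) : ℝ × ℝ) ∈ Set.Icc (0:ℝ) P ×ˢ Set.Icc (0:ℝ) P)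
  simp only [Set.mem_setOf_eq] at this
  rw [e1, e2, e3] at this
  exact this


lemma l_pos {α1 α2 : ℚ} {l : ℝ} (hl : IsLeast (Lset α1 α2) l) : 0 < l := by
  obtain ⟨m, m1, m2, heq, hne⟩ := hl.1
  rw [heq]; exact abs_pos.mpr hne

lemma G_abs_lb {α1 α2 : ℚ} {l : ℝ} (hl : IsLeast (Lset α1 α2) l) {x : ℝ}
    (hx : x ∈ G α1 α2) (hx0 : x ≠ 0) : l ≤ |x| := by
  obtain ⟨m, m1, m2, rfl⟩ := hx
  exact hl.2 ⟨m, m1, m2, rfl, hx0⟩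

lemma kl_mem_G {α1 α2 : ℚ} {l : ℝ} (hl : IsLeast (Lset α1 α2) l) (k : ℤ) :
    (k:ℝ) * l ∈ G α1 α2 := by
  obtain ⟨m, m1, m2, heq, hne⟩ := hl.1
  have hG : (m:ℝ)*π + (m1:ℝ)*(α1:ℝ)*π + (m2:ℝ)*(α2:ℝ)*π ∈ G α1 α2 := ⟨m, m1, m2, rfl⟩
  rcases abs_choice ((m:ℝ)*π + (m1:ℝ)*(α1:ℝ)*π + (m2:ℝ)*(α2:ℝ)*π) with h | h
  · rw [heq, h]
    exact G_intmul k hG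
  · rw [heq, h]
    have h2 : (k:ℝ) * -((m:ℝ)*π + (m1:ℝ)*(α1:ℝ)*π + (m2:ℝ)*(α2:ℝ)*π)
        = ((-k : ℤ):ℝ) * ((m:ℝ)*π + (m1:ℝ)*(α1:ℝ)*π + (m2:ℝ)*(α2:ℝ)*π) := by
      push_cast; ring
    rw [h2]
    exact G_intmul (-k) hG

lemma M_anti (r1 r2 r3 : ℝ) (hr1 : 0 < r1) (hr2 : 0 < r2) (hr3 : 0 < r3)
    (α1 α2 : ℚ) {l : ℝ} (hl : IsLeast (Lset α1 α2) l) {s t : ℝ}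
    (hs : 0 ≤ s) (hst : s < t) (htl : t ≤ l) :
    M r1 r2 r3 α1 α2 t < M r1 r2 r3 α1 α2 s := by
  have hπ := Real.pi_pos
  obtain ⟨θ1, θ2, hMt⟩ := M_attain r1 r2 r3 hr1.le hr2.le hr3.le α1 α2 t
  obtain ⟨n1, ha1, hc1⟩ := reduceAngle θ1
  obtain ⟨n2, ha2, hc2⟩ := reduceAngle θ2
  obtain ⟨n3, ha3, hc3⟩ := reduceAngle ((α1:ℝ)*θ1 + (α2:ℝ)*θ2 + t)
  set a := θ1 - 2*π*n1 with hadef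
  set b := θ2 - 2*π*n2 with hbdef
  set c := (α1:ℝ)*θ1 + (α2:ℝ)*θ2 + t - 2*π*n3 with hcdef
  set u := c - (α1:ℝ)*a - (α2:ℝ)*b with hudef
  have hxG : (u - t)/2 ∈ G α1 α2 :=
    ⟨-n3, n1, n2, by rw [hudef, hadef, hbdef, hcdef]; push_cast; ring⟩
  have htpos : 0 < t := lt_of_le_of_lt hs hst
  have hut : t ≤ |u| := by
    rcases eq_or_ne ((u - t)/2) 0 with h0 | h0
    · have hu : u = t := by
        have : u - t = 0 := by linarith [h0]
        linarith
      rw [hu, abs_of_pos htpos]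
    · have hlb := G_abs_lb hl hxG h0
      have h1 : |u - t| ≤ |u| + |t| := by
        simpa [sub_eq_add_neg, abs_neg] using abs_add_le u (-t)
      rw [abs_of_pos htpos] at h1
      rw [show |(u-t)/2| = |u - t|/2 by rw [abs_div, abs_two]] at hlb
      linarith
  have hu0 : u ≠ 0 := by
    intro h; rw [h, abs_zero] at hut; linarith
  set lam := s / u with hlam
  have hupos : 0 < |u| := lt_of_lt_of_le htpos hut
  have hlam1 : |lam| < 1 := by
    rw [hlam, abs_div, div_lt_one hupos, abs_of_nonneg hs]
    exact lt_of_lt_of_le hst hut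
  have hlamu : lam * u = s := div_mul_cancel₀ s hu0
  have hval : M r1 r2 r3 α1 α2 t = r1 * cos a + r2 * cos b + r3 * cos c := by
    rw [hMt, ← hc1, ← hc2, ← hc3]
  have hcomp : r1 * cos (lam*a) + r2 * cos (lam*b) + r3 * cos (lam*c)
      ≤ M r1 r2 r3 α1 α2 s := by
    have h := f_le_M r1 r2 r3 hr1.le hr2.le hr3.le α1 α2 s (lam*a) (lam*b)
    rw [show (α1:ℝ)*(lam*a) + (α2:ℝ)*(lam*b) + s = lam*c by
      rw [← hlamu, hudef]; ring] at h
    exact h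
  have hkey : ∀ x : ℝ, |x| ≤ π → cos x ≤ cos (lam*x) := by
    intro x hx
    rw [← Real.cos_abs x, ← Real.cos_abs (lam*x)]
    apply Real.cos_le_cos_of_nonneg_of_le_pi (abs_nonneg _) hx
    rw [abs_mul]
    nlinarith [abs_nonneg x, abs_nonneg lam]
  have hkey' : ∀ x : ℝ, x ≠ 0 → |x| ≤ π → cos x < cos (lam*x) := by
    intro x hx0 hx
    rw [← Real.cos_abs x, ← Real.cos_abs (lam*x)]
    apply Real.cos_lt_cos_of_nonneg_of_le_pi (abs_nonneg _) hx
    rw [abs_mul]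
    have hx0' : 0 < |x| := abs_pos.mpr hx0
    nlinarith
  have habc : a ≠ 0 ∨ b ≠ 0 ∨ c ≠ 0 := by
    by_contra h
    push_neg at h
    obtain ⟨h1', h2', h3'⟩ := h
    rw [h1', h2', h3'] at hudef
    simp at hudef
    rw [hudef, abs_zero] at hut
    linarith
  have hstrict : r1 * cos a + r2 * cos b + r3 * cos c
      < r1 * cos (lam*a) + r2 * cos (lam*b) + r3 * cos (lam*c) := by
    rcases habc with h | h | h
    · have k1 := mul_lt_mul_of_pos_left (hkey' a h ha1) hr1
      have k2 := mul_le_mul_of_nonneg_left (hkey b ha2) hr2.le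
      have k3 := mul_le_mul_of_nonneg_left (hkey c ha3) hr3.le
      linarith
    · have k1 := mul_le_mul_of_nonneg_left (hkey a ha1) hr1.le
      have k2 := mul_lt_mul_of_pos_left (hkey' b h ha2) hr2
      have k3 := mul_le_mul_of_nonneg_left (hkey c ha3) hr3.le
      linarith
    · have k1 := mul_le_mul_of_nonneg_left (hkey a ha1) hr1.le
      have k2 := mul_le_mul_of_nonneg_left (hkey b ha2) hr2.le
      have k3 := mul_lt_mul_of_pos_left (hkey' c h ha3) hr3
      linarith
  rw [hval]
  exact lt_of_lt_of_le hstrict hcomp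

end Stmt7Aux

open Stmt7Aux in
theorem stmt7 (r1 r2 r3 : ℝ) (hr1 : 0 < r1) (hr2 : 0 < r2) (hr3 : 0 < r3)
    (α1 α2 : ℚ) (l : ℝ) (hl : IsLeast (Lset α1 α2) l) :
    ∀ t1 t2 : ℝ, M r1 r2 r3 α1 α2 t1 = M r1 r2 r3 α1 α2 t2 ↔
      ∃ k : ℤ, t1 = t2 + 2 * (k : ℝ) * l ∨ t1 = 2 * (k : ℝ) * l - t2 := by
  intro t1 t2
  have hl0 : 0 < l := l_pos hl
  have Mred : ∀ t : ℝ, ∃ n : ℤ, |t - 2*l*n| ≤ l ∧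
      M r1 r2 r3 α1 α2 t = M r1 r2 r3 α1 α2 |t - 2*l*n| := by
    intro t
    refine ⟨round (t / (2*l)), ?_, ?_⟩
    · have h1 : |t/(2*l) - round (t/(2*l))| ≤ 1/2 := abs_sub_round _
      have h2 : t - 2*l*(round (t/(2*l))) = (2*l) * (t/(2*l) - round (t/(2*l))) := by
        field_simp
      rw [h2, abs_mul, abs_of_pos (by linarith : (0:ℝ) < 2*l)]
      nlinarith
    · have e1 : M r1 r2 r3 α1 α2 t = M r1 r2 r3 α1 α2 (t - 2*l*(round (t/(2*l)))) := by
        have h := M_shift r1 r2 r3 α1 α2 (kl_mem_G hl (round (t/(2*l))))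
          (t - 2*l*(round (t/(2*l))))
        rw [show t - 2*l*(round (t/(2*l))) + 2*(((round (t/(2*l))):ℝ)*l) = t by ring] at h
        exact h
      rcases abs_choice (t - 2*l*(round (t/(2*l)))) with h | h
      · rw [e1, h]
      · rw [e1, h, M_neg]
  constructor
  · intro hM
    obtain ⟨n1, hb1, hM1⟩ := Mred t1
    obtain ⟨n2, hb2, hM2⟩ := Mred t2
    have hdd : |t1 - 2*l*n1| = |t2 - 2*l*n2| := by
      by_contra hne
      rcases lt_or_gt_of_ne hne with hlt | hlt
      · have := M_anti r1 r2 r3 hr1 hr2 hr3 α1 α2 hl (abs_nonneg _) hlt hb2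
        rw [← hM1, ← hM2] at this
        linarith [hM.le, hM.ge]
      · have := M_anti r1 r2 r3 hr1 hr2 hr3 α1 α2 hl (abs_nonneg _) hlt hb1
        rw [← hM1, ← hM2] at this
        linarith [hM.le, hM.ge]
    rcases abs_eq_abs.mp hdd with h | h
    · exact ⟨n1 - n2, Or.inl (by push_cast; linear_combination h)⟩
    · exact ⟨n1 + n2, Or.inr (by push_cast; linear_combination h)⟩
  · rintro ⟨k, hk | hk⟩
    · rw [hk, show t2 + 2*(k:ℝ)*l = t2 + 2*((k:ℝ)*l) by ring,
        M_shift r1 r2 r3 α1 α2 (kl_mem_G hl k)]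
    · rw [hk, show 2*(k:ℝ)*l - t2 = -t2 + 2*((k:ℝ)*l) by ring,
        M_shift r1 r2 r3 α1 α2 (kl_mem_G hl k), M_neg]
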